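/- Let p, s ≥ 1 and n = 2p+s. The family G consisting of all members of H^(p,s)(n) that do NOT contain the vertex (n,0) is an intersecting family whose size equals the size of a star (i.e., |G| = |H^(p,s)_x(n)| for any vertex x), yet G is not a star. Hence H^(p,s)(2p+s) is EKR but not strongly EKR. -/

import Mathlib

open Finset

/-- The family `H^(p,s)(n)` of vertex subsets of the perfect matching graph `M_n`
with exactly `p` full edges and exactly `s` singleton vertices. -/
def mFamily (n p s : ℕ) : Finset (Finset (Fin n × Bool)) :=
  univ.filter fun F =>
    (univ.filter fun i : Fin n => ((i, false) ∈ F ∧ (i, true) ∈ F)).card = p ∧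
    (univ.filter fun i : Fin n => Xor ((i, false) ∈ F) ((i, true) ∈ F)).card = s

/-- The star `H^(p,s)_x(n)`: members of `H^(p,s)(n)` containing the vertex `x`. -/
def mStar (n p s : ℕ) (x : Fin n × Bool) : Finset (Finset (Fin n × Bool)) :=
  (mFamily n p s).filter fun F => x ∈ F

/-- A family of finite sets is intersecting if any two members meet. -/
def Intersecting {α : Type*} [DecidableEq α] (𝓕 : Finset (Finset α)) : Prop :=
  ∀ A ∈ 𝓕, ∀ B ∈ 𝓕, (A ∩ B).Nonempty

/- ### Auxiliary lemmas -/

lemma mem_mFamily_iff {n p s : ℕ} {F : Finset (Fin n × Bool)} :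
    F ∈ mFamily n p s ↔
      (univ.filter fun i : Fin n => ((i, false) ∈ F ∧ (i, true) ∈ F)).card = p ∧
      (univ.filter fun i : Fin n => Xor ((i, false) ∈ F) ((i, true) ∈ F)).card = s := by
  simp [mFamily]

lemma card_eq_two_mul_add {n : ℕ} (F : Finset (Fin n × Bool)) :
    F.card = 2 * (univ.filter fun i : Fin n => ((i, false) ∈ F ∧ (i, true) ∈ F)).card
      + (univ.filter fun i : Fin n => Xor ((i, false) ∈ F) ((i, true) ∈ F)).card := by
  conv_lhs => rw [← Finset.filter_univ_mem F]
  rw [Finset.card_filter, Finset.card_filter, Finset.card_filter,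
    Fintype.sum_prod_type, Finset.mul_sum, ← Finset.sum_add_distrib]
  refine Finset.sum_congr rfl fun i _ => ?_
  rw [Fintype.sum_bool]
  by_cases h1 : (i, false) ∈ F <;> by_cases h2 : (i, true) ∈ F <;> simp [h1, h2, Xor]

lemma card_of_mem_mFamily {n p s : ℕ} {F : Finset (Fin n × Bool)}
    (hF : F ∈ mFamily n p s) : F.card = 2 * p + s := by
  rw [mem_mFamily_iff] at hF
  rw [card_eq_two_mul_add F, hF.1, hF.2]

lemma compl_mem_mFamily {n p s : ℕ} (hn : n = 2 * p + s) {F : Finset (Fin n × Bool)}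
    (hF : F ∈ mFamily n p s) : Fᶜ ∈ mFamily n p s := by
  rw [mem_mFamily_iff] at hF ⊢
  obtain ⟨h1, h2⟩ := hF
  constructor
  · -- pairs of the complement are the "neither" indices of F
    have hcong : (univ.filter fun i : Fin n => ((i, false) ∈ Fᶜ ∧ (i, true) ∈ Fᶜ)) =
        (univ.filter fun i : Fin n =>
          ¬(((i, false) ∈ F ∧ (i, true) ∈ F) ∨ Xor ((i, false) ∈ F) ((i, true) ∈ F))) := by
      refine Finset.filter_congr fun i _ => ?_
      simp only [Finset.mem_compl, Xor]
      tauto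
    rw [hcong]
    have hsum := Finset.card_filter_add_card_filter_not
      (s := (univ : Finset (Fin n)))
      (p := fun i : Fin n =>
        ((i, false) ∈ F ∧ (i, true) ∈ F) ∨ Xor ((i, false) ∈ F) ((i, true) ∈ F))
    have hor : (univ.filter fun i : Fin n =>
        ((i, false) ∈ F ∧ (i, true) ∈ F) ∨ Xor ((i, false) ∈ F) ((i, true) ∈ F)).card
        = p + s := by
      rw [Finset.filter_or, Finset.card_union_of_disjoint, h1, h2]
      · rw [Finset.disjoint_filter]
        intro i _ hi hxor
        simp [Xor] at hxor
        tauto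
    rw [hor] at hsum
    simp only [Finset.card_univ, Fintype.card_fin] at hsum
    omega
  · have hcong : (univ.filter fun i : Fin n => Xor ((i, false) ∈ Fᶜ) ((i, true) ∈ Fᶜ)) =
        (univ.filter fun i : Fin n => Xor ((i, false) ∈ F) ((i, true) ∈ F)) := by
      refine Finset.filter_congr fun i _ => ?_
      simp only [Finset.mem_compl, Xor]
      tauto
    rw [hcong, h2]

/-- A "twist" automorphism of `Fin n × Bool`: permute indices and flip signs. -/
def twist (n : ℕ) (σ : Equiv.Perm (Fin n)) (c : Fin n → Bool) :
    (Fin n × Bool) ≃ (Fin n × Bool) where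
  toFun z := (σ z.1, xor (c z.1) z.2)
  invFun z := (σ.symm z.1, xor (c (σ.symm z.1)) z.2)
  left_inv := by
    rintro ⟨i, b⟩
    simp only [Equiv.symm_apply_apply]
    cases hc : c i <;> simp [hc]
  right_inv := by
    rintro ⟨i, b⟩
    simp only [Equiv.apply_symm_apply]
    cases hc : c (σ.symm i) <;> simp [hc]

lemma card_filter_perm {α : Type*} [Fintype α] [DecidableEq α] (σ : Equiv.Perm α)
    (P : α → Prop) [DecidablePred P] :
    (univ.filter fun j => P (σ j)).card = (univ.filter P).card := by
  refine Finset.card_bij' (fun j _ => σ j) (fun j _ => σ.symm j) ?_ ?_ ?_ ?_ <;> simp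

lemma map_twist_mem_mFamily {n p s : ℕ} (σ : Equiv.Perm (Fin n)) (c : Fin n → Bool)
    (F : Finset (Fin n × Bool)) :
    F.map (twist n σ c).toEmbedding ∈ mFamily n p s ↔ F ∈ mFamily n p s := by
  have hmem : ∀ z : Fin n × Bool, z ∈ F.map (twist n σ c).toEmbedding ↔
      (σ.symm z.1, xor (c (σ.symm z.1)) z.2) ∈ F := by
    intro z
    rw [Finset.mem_map_equiv]
    rfl
  rw [mem_mFamily_iff, mem_mFamily_iff]
  have h1 : (univ.filter fun i : Fin n =>
      ((i, false) ∈ F.map (twist n σ c).toEmbedding ∧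
        (i, true) ∈ F.map (twist n σ c).toEmbedding)).card
      = (univ.filter fun i : Fin n => ((i, false) ∈ F ∧ (i, true) ∈ F)).card := by
    have hcong : (univ.filter fun i : Fin n =>
        ((i, false) ∈ F.map (twist n σ c).toEmbedding ∧
          (i, true) ∈ F.map (twist n σ c).toEmbedding))
        = (univ.filter fun i : Fin n =>
          ((σ.symm i, false) ∈ F ∧ (σ.symm i, true) ∈ F)) := by
      refine Finset.filter_congr fun i _ => ?_
      rw [hmem, hmem]
      cases hc : c (σ.symm i) <;> simp [hc, and_comm]
    rw [hcong]
    exact card_filter_perm σ.symm (fun i => ((i, false) ∈ F ∧ (i, true) ∈ F))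
  have h2 : (univ.filter fun i : Fin n =>
      Xor ((i, false) ∈ F.map (twist n σ c).toEmbedding)
        ((i, true) ∈ F.map (twist n σ c).toEmbedding)).card
      = (univ.filter fun i : Fin n => Xor ((i, false) ∈ F) ((i, true) ∈ F)).card := by
    have hcong : (univ.filter fun i : Fin n =>
        Xor ((i, false) ∈ F.map (twist n σ c).toEmbedding)
          ((i, true) ∈ F.map (twist n σ c).toEmbedding))
        = (univ.filter fun i : Fin n =>
          Xor ((σ.symm i, false) ∈ F) ((σ.symm i, true) ∈ F)) := by
      refine Finset.filter_congr fun i _ => ?_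
      rw [hmem, hmem]
      cases hc : c (σ.symm i) <;> simp [hc, Xor] <;> tauto
    rw [hcong]
    exact card_filter_perm σ.symm (fun i => Xor ((i, false) ∈ F) ((i, true) ∈ F))
  rw [h1, h2]

lemma map_map_symm {α : Type*} [DecidableEq α] (e : α ≃ α) (F : Finset α) :
    (F.map e.toEmbedding).map e.symm.toEmbedding = F := by
  ext z
  simp [Finset.mem_map_equiv]

lemma card_mStar_const {n p s : ℕ} (x y : Fin n × Bool) :
    (mStar n p s x).card = (mStar n p s y).card := by
  set e := twist n (Equiv.swap x.1 y.1)
      (fun j => if j = x.1 then xor x.2 y.2 else false) with he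
  have hex : e x = y := by
    have : e x = (Equiv.swap x.1 y.1 x.1, xor (xor x.2 y.2) x.2) := by
      simp [he, twist]
    rw [this, Equiv.swap_apply_left]
    have : xor (xor x.2 y.2) x.2 = y.2 := by cases hx : x.2 <;> cases hy : y.2 <;> simp [hx, hy]
    rw [this]
  have hsymm : e.symm y = x := by rw [← hex, Equiv.symm_apply_apply]
  refine Finset.card_bij' (fun F _ => F.map e.toEmbedding)
    (fun F _ => F.map e.symm.toEmbedding) ?_ ?_ ?_ ?_
  · intro F hF
    rw [mStar, Finset.mem_filter] at hF ⊢
    refine ⟨(map_twist_mem_mFamily _ _ F).2 hF.1, ?_⟩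
    rw [Finset.mem_map_equiv, hsymm]
    exact hF.2
  · intro B hB
    rw [mStar, Finset.mem_filter] at hB ⊢
    have hmm : (B.map e.symm.toEmbedding).map e.toEmbedding = B := by
      have := map_map_symm e.symm B
      rwa [Equiv.symm_symm] at this
    constructor
    · have := (map_twist_mem_mFamily (p := p) (s := s)
        (Equiv.swap x.1 y.1) (fun j => if j = x.1 then xor x.2 y.2 else false)
        (B.map e.symm.toEmbedding))
      rw [← he] at this
      exact this.1 (by rw [hmm]; exact hB.1)
    · rw [Finset.mem_map_equiv, Equiv.symm_symm, hex]
      exact hB.2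
  · intro F _
    exact map_map_symm e F
  · intro B _
    have := map_map_symm e.symm B
    rwa [Equiv.symm_symm] at this

lemma card_filter_val_lt (n k : ℕ) (hk : k ≤ n) :
    (univ.filter fun j : Fin n => (j : ℕ) < k).card = k := by
  refine Eq.trans (Finset.card_bij' (fun j hj => (⟨(j : ℕ), by
      simp only [Finset.mem_filter] at hj; exact hj.2⟩ : Fin k))
    (fun a _ => (⟨(a : ℕ), lt_of_lt_of_le a.2 hk⟩ : Fin n)) ?_ ?_ ?_ ?_)
    (Finset.card_univ.trans (Fintype.card_fin k)) <;> simp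

lemma card_filter_val_le (n k : ℕ) (hk : k ≤ n) :
    (univ.filter fun j : Fin n => k ≤ (j : ℕ)).card = n - k := by
  have h := Finset.card_filter_add_card_filter_not
    (s := (univ : Finset (Fin n))) (p := fun j : Fin n => (j : ℕ) < k)
  rw [card_filter_val_lt n k hk] at h
  simp only [not_lt, Finset.card_univ, Fintype.card_fin] at h
  omega

/-- The explicit witness member: full pairs on indices `< p`,
`false`-singletons on indices `≥ 2p`. -/
def wit (n p : ℕ) : Finset (Fin n × Bool) :=
  univ.filter fun z : Fin n × Bool => (z.1 : ℕ) < p ∨ (2 * p ≤ (z.1 : ℕ) ∧ z.2 = false)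

lemma mem_wit {n p : ℕ} (z : Fin n × Bool) :
    z ∈ wit n p ↔ (z.1 : ℕ) < p ∨ (2 * p ≤ (z.1 : ℕ) ∧ z.2 = false) := by
  simp [wit]

lemma wit_mem_mFamily {n p s : ℕ} (hp : 1 ≤ p) (hs : 1 ≤ s) (hn : n = 2 * p + s) :
    wit n p ∈ mFamily n p s := by
  rw [mem_mFamily_iff]
  constructor
  · have hcong : (univ.filter fun i : Fin n =>
        ((i, false) ∈ wit n p ∧ (i, true) ∈ wit n p))
        = (univ.filter fun i : Fin n => (i : ℕ) < p) := by
      refine Finset.filter_congr fun i _ => ?_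
      rw [mem_wit, mem_wit]
      simp only
      constructor
      · rintro ⟨_, h⟩
        rcases h with h | ⟨_, h⟩
        · exact h
        · exact absurd h (by simp)
      · intro h
        exact ⟨Or.inl h, Or.inl h⟩
    rw [hcong, card_filter_val_lt n p (by omega)]
  · have hcong : (univ.filter fun i : Fin n =>
        Xor ((i, false) ∈ wit n p) ((i, true) ∈ wit n p))
        = (univ.filter fun i : Fin n => 2 * p ≤ (i : ℕ)) := by
      refine Finset.filter_congr fun i _ => ?_
      rw [mem_wit, mem_wit]
      simp only [Xor]
      constructor
      · rintro (⟨h1, h2⟩ | ⟨h1, h2⟩)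
        · rcases h1 with h | ⟨h, _⟩
          · exact absurd (Or.inl h) h2
          · exact h
        · rcases h1 with h | ⟨_, h⟩
          · exact absurd (Or.inl h) h2
          · exact absurd h (by simp)
      · intro h
        refine Or.inl ⟨Or.inr ⟨h, by simp⟩, ?_⟩
        rintro (h' | ⟨_, h'⟩)
        · omega
        · exact absurd h' (by simp)
    rw [hcong, card_filter_val_le n (2 * p) (by omega)]
    omega

lemma card_G_eq_star {n p s : ℕ} (hn : n = 2 * p + s) (x₀ : Fin n × Bool) :
    ((mFamily n p s).filter fun H => x₀ ∉ H).card = (mStar n p s x₀).card := by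
  refine Finset.card_bij' (fun F _ => Fᶜ) (fun F _ => Fᶜ) ?_ ?_ ?_ ?_
  · intro F hF
    rw [Finset.mem_filter] at hF
    rw [mStar, Finset.mem_filter]
    exact ⟨compl_mem_mFamily hn hF.1, Finset.mem_compl.2 hF.2⟩
  · intro B hB
    rw [mStar, Finset.mem_filter] at hB
    rw [Finset.mem_filter]
    refine ⟨compl_mem_mFamily hn hB.1, ?_⟩
    rw [Finset.mem_compl, not_not]
    exact hB.2
  · intro F _
    exact compl_compl F
  · intro B _
    exact compl_compl B

/-- For `n = 2p+s`, the family of members of `H^(p,s)(n)` avoiding the vertex `(n, 0)`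
(here the last index `⟨n-1, _⟩ : Fin n` with sign `false`) is an intersecting family of
maximum (star) size which is not a star: `H^(p,s)(2p+s)` is not strongly EKR. -/
theorem not_strongly_EKR (n p s : ℕ) (hp : 1 ≤ p) (hs : 1 ≤ s) (hn : n = 2 * p + s) :
    Intersecting ((mFamily n p s).filter fun H => (⟨n - 1, by omega⟩, false) ∉ H) ∧
    (∀ x : Fin n × Bool,
      ((mFamily n p s).filter fun H => (⟨n - 1, by omega⟩, false) ∉ H).card =
        (mStar n p s x).card) ∧
    ∀ x : Fin n × Bool,
      ((mFamily n p s).filter fun H => (⟨n - 1, by omega⟩, false) ∉ H) ≠ mStar n p s x := by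
  have hn1 : n - 1 < n := by omega
  set x₀ : Fin n × Bool := (⟨n - 1, hn1⟩, false) with hx₀
  refine ⟨?_, ?_, ?_⟩
  · -- intersecting
    intro A hA B hB
    rw [Finset.mem_filter] at hA hB
    by_contra hcon
    rw [Finset.not_nonempty_iff_eq_empty] at hcon
    have hBA : B ⊆ Aᶜ := by
      intro z hz
      rw [Finset.mem_compl]
      intro hzA
      have : z ∈ A ∩ B := Finset.mem_inter.2 ⟨hzA, hz⟩
      rw [hcon] at this
      exact absurd this (Finset.notMem_empty z)
    have hcard : Aᶜ.card ≤ B.card := by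
      rw [Finset.card_compl, card_of_mem_mFamily hA.1, card_of_mem_mFamily hB.1]
      have : Fintype.card (Fin n × Bool) = 2 * n := by
        simp [Fintype.card_prod, mul_comm]
      omega
    have hBAc : B = Aᶜ := Finset.eq_of_subset_of_card_le hBA hcard
    have hx0B : x₀ ∈ B := by
      rw [hBAc, Finset.mem_compl]
      exact hA.2
    exact hB.2 hx0B
  · -- cardinality
    intro x
    rw [card_G_eq_star hn x₀]
    exact card_mStar_const x₀ x
  · -- not a star
    intro x heq
    set e := twist n (Equiv.swap (⟨0, by omega⟩ : Fin n) x.1) (fun _ => false) with he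
    set F := (wit n p).map e.toEmbedding with hF
    have hFfam : F ∈ mFamily n p s :=
      (map_twist_mem_mFamily _ _ _).2 (wit_mem_mFamily hp hs hn)
    have hmemF : ∀ z : Fin n × Bool, z ∈ F ↔
        ((Equiv.swap (⟨0, by omega⟩ : Fin n) x.1) z.1, z.2) ∈ wit n p := by
      intro z
      rw [hF, Finset.mem_map_equiv]
      have : e.symm z = ((Equiv.swap (⟨0, by omega⟩ : Fin n) x.1).symm z.1,
          xor false z.2) := rfl
      rw [this, Equiv.symm_swap, Bool.false_xor]
    have hxF : x ∈ F := by
      rw [hmemF, mem_wit]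
      left
      have : Equiv.swap (⟨0, by omega⟩ : Fin n) x.1 x.1 = ⟨0, by omega⟩ :=
        Equiv.swap_apply_right _ _
      rw [this]
      simp; omega
    have hx0F : x₀ ∈ F := by
      rw [hmemF, mem_wit]
      by_cases hcase : (⟨n - 1, hn1⟩ : Fin n) = x.1
      · left
        rw [hx₀]
        simp only
        rw [hcase, Equiv.swap_apply_right]
        simp; omega
      · have h0 : (⟨n - 1, hn1⟩ : Fin n) ≠ (⟨0, by omega⟩ : Fin n) := by
          intro h
          have := congrArg Fin.val h
          simp at this
          omega
        right
        rw [hx₀]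
        simp only
        rw [Equiv.swap_apply_of_ne_of_ne h0 hcase]
        exact ⟨by simp; omega, by simp⟩
    have hFstar : F ∈ mStar n p s x := by
      rw [mStar, Finset.mem_filter]
      exact ⟨hFfam, hxF⟩
    rw [← heq, Finset.mem_filter] at hFstar
    exact hFstar.2 hx0F
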